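/- arXiv:1011.5079 — 2 statements merged into one kernel-verified Lean document; each statement's English description precedes it below -/
import Mathlib

section
/- Let A be a commutative ring and let P be a finitely generated projective A-module of constant rank ≥ 2. Then EL(A ⊕ P) = E(A ⊕ P), where EL(A ⊕ P) is the subgroup of Aut_A(A ⊕ P) generated by the automorphisms Δ_{aφ}: (x,q) ↦ (x + aφ(q), q) for a ∈ A, φ ∈ Hom_A(P,A), and Γ_m: (x,q) ↦ (x, q + x·m) for m ∈ P. -/
/-! Common definitions: unimodular elements, transvections, the groups `E(M)`,
elementary matrices, `E_n(R)` and relatives, unimodular rows, constant rank. -/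

/-- An element `m` of an `A`-module `M` is unimodular if some linear functional maps it to `1`. -/
def IsUnimodular (A : Type*) [CommRing A] {M : Type*} [AddCommGroup M] [Module A M]
    (m : M) : Prop := ∃ φ : M →ₗ[A] A, φ m = 1

/-- A transvection of an `A`-module `M`: an automorphism `q ↦ q + φ(q) • p` with `φ(p) = 0`
and `p` unimodular or `φ` unimodular in the dual module. -/
def IsTransvection (A : Type*) [CommRing A] {M : Type*} [AddCommGroup M] [Module A M]
    (τ : M ≃ₗ[A] M) : Prop :=
  ∃ (p : M) (φ : M →ₗ[A] A), φ p = 0 ∧ (IsUnimodular A p ∨ IsUnimodular A φ) ∧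
    ∀ q : M, τ q = q + φ q • p

/-- `E(M)`: the subgroup of `Aut_A(M)` generated by all transvections. -/
def Egroup (A : Type*) [CommRing A] (M : Type*) [AddCommGroup M] [Module A M] :
    Subgroup (M ≃ₗ[A] M) := Subgroup.closure {τ | IsTransvection A τ}

/-- `E(M)` acts transitively on `Um(M)`. -/
def ETransitive (A : Type*) [CommRing A] (M : Type*) [AddCommGroup M] [Module A M] : Prop :=
  ∀ u v : M, IsUnimodular A u → IsUnimodular A v → ∃ σ ∈ Egroup A M, σ u = v

/-- The elementary matrix `Id + a • e_{i j}`. -/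
def elemMatrix {R : Type*} [CommRing R] {n : ℕ} (i j : Fin n) (a : R) :
    Matrix (Fin n) (Fin n) R := 1 + Matrix.single i j a

/-- `E_n(R)`: the subgroup of `GL_n(R)` generated by the elementary matrices `E_{ij}(a)`, `i ≠ j`. -/
def En (R : Type*) [CommRing R] (n : ℕ) : Subgroup (GL (Fin n) R) :=
  Subgroup.closure {g | ∃ i j a, i ≠ j ∧ (g : Matrix (Fin n) (Fin n) R) = elemMatrix i j a}

/-- `E_n(I)`: the subgroup of `E_n(R)` generated by the `E_{ij}(a)` with `a ∈ I`. -/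
def EnIdeal (R : Type*) [CommRing R] (n : ℕ) (I : Ideal R) : Subgroup (GL (Fin n) R) :=
  Subgroup.closure
    {g | ∃ i j a, i ≠ j ∧ a ∈ I ∧ (g : Matrix (Fin n) (Fin n) R) = elemMatrix i j a}

/-- `E_n(R, I)`: the normal closure of `E_n(I)` in `E_n(R)`. -/
def EnRel (R : Type*) [CommRing R] (n : ℕ) (I : Ideal R) : Subgroup (GL (Fin n) R) :=
  Subgroup.closure {x | ∃ e ∈ En R n, ∃ g ∈ EnIdeal R n I, x = e * g * e⁻¹}

/-- `E_n^1(R, I)`: the subgroup generated by `E_{i1}(a)`, `a ∈ R`, `i ≠ 1`, together with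
`E_{1j}(x)`, `x ∈ I`, `j ≠ 1` (indices `1,…,n` are `Fin n`, the first index being `⟨0, _⟩`). -/
def En1 (R : Type*) [CommRing R] (n : ℕ) (hn : 0 < n) (I : Ideal R) : Subgroup (GL (Fin n) R) :=
  Subgroup.closure
    {g | (∃ (i : Fin n) (a : R), i ≠ ⟨0, hn⟩ ∧
            (g : Matrix (Fin n) (Fin n) R) = elemMatrix i ⟨0, hn⟩ a) ∨
         (∃ (j : Fin n) (x : R), x ∈ I ∧ j ≠ ⟨0, hn⟩ ∧
            (g : Matrix (Fin n) (Fin n) R) = elemMatrix ⟨0, hn⟩ j x)}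

/-- A row is unimodular if its entries generate the unit ideal. -/
def IsUnimodularRow {R : Type*} [CommRing R] {n : ℕ} (v : Fin n → R) : Prop :=
  Ideal.span (Set.range v) = ⊤

/-- `E_n(R)` acts transitively on `Um_n(R)` (by right multiplication on rows). -/
def EnTransitive (R : Type*) [CommRing R] (n : ℕ) : Prop :=
  ∀ u v : Fin n → R, IsUnimodularRow u → IsUnimodularRow v →
    ∃ g ∈ En R n, Matrix.vecMul u (g : Matrix (Fin n) (Fin n) R) = v

/-- A module `P` has constant rank `r`: the localization at every prime is free of rank `r`. -/
def HasConstantRank (A : Type*) [CommRing A] (P : Type*) [AddCommGroup P] [Module A P]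
    (r : ℕ) : Prop :=
  ∀ (𝔭 : Ideal A) (_ : 𝔭.IsPrime),
    Nonempty ((LocalizedModule 𝔭.primeCompl P) ≃ₗ[Localization.AtPrime 𝔭]
      (Fin r → Localization.AtPrime 𝔭))
/-- `EL(A ⊕ P)`: the subgroup of `Aut_A(A ⊕ P)` generated by the automorphisms
`Δ_{aφ} : (x, q) ↦ (x + a φ(q), q)` and `Γ_m : (x, q) ↦ (x, q + x • m)`. -/
def ELgroup (A : Type*) [CommRing A] (P : Type*) [AddCommGroup P] [Module A P] :
    Subgroup ((A × P) ≃ₗ[A] (A × P)) :=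
  Subgroup.closure
    ({σ | ∃ (a : A) (φ : P →ₗ[A] A), ∀ (x : A) (q : P), σ (x, q) = (x + a * φ q, q)} ∪
     {σ | ∃ m : P, ∀ (x : A) (q : P), σ (x, q) = (x, q + x • m)})

/-! A transvection `x ↦ x + F x • p` of `A ⊕ P` (with `F p = 0`) lies in `EL(A ⊕ P)` as soon as
`p ∈ 0 ⊕ P` or `F` vanishes on `A ⊕ 0`: it is then a product of generators `Δ`, `Γ` and of
commutators `⁅Γ, Δ⁆`. For an arbitrary transvection, the `s ∈ A` such that every
`x ↦ x + c s F x • p` lies in `EL(A ⊕ P)` form an ideal, and it suffices to show that this ideal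
lies in no maximal ideal `𝔪`. Unimodularity of `p` (resp. `F`) gives, after conjugating by a
suitable `Γ_n` (resp. `Δ_χ`), a unit modulo `𝔪` of the form `χ p.2` (resp. `F (0, w)`). Since
`P_𝔪` is free of rank `≥ 2`, there is then a functional (resp. a vector) orthogonal to `p.2`
(resp. to `F` on `P`) that is nonzero modulo `𝔪`, and two commutator identities put a product
of these units into the ideal. -/

open Module
open scoped commutatorElement

namespace LinearEquiv.transvection

section Ring

variable {R V : Type*} [Ring R] [AddCommGroup V] [Module R V]

theorem congr_smul {f g : Dual R V} {v w : V} (hf : f v = 0) (hg : g w = 0)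
    (h : ∀ x, f x • v = g x • w) : transvection hf = transvection hg := by
  ext x
  simp [LinearMap.transvection.apply, h]

theorem mul_of_left_eq {f : Dual R V} {v w : V} (hv : f v = 0) (hw : f w = 0) :
    transvection hv * transvection hw = transvection (f := f) (v := v + w) (by simp [hv, hw]) :=
  trans_of_left_eq hv hw

theorem mul_of_right_eq {f g : Dual R V} {v : V} (hf : f v = 0) (hg : g v = 0) :
    transvection hf * transvection hg = transvection (f := f + g) (v := v) (by simp [hf, hg]) :=
  trans_of_right_eq hf hg

theorem conj (σ : V ≃ₗ[R] V) {f : Dual R V} {v : V} (h : f v = 0) :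
    σ * transvection h * σ⁻¹ =
      transvection (f := f ∘ₗ σ.symm.toLinearMap) (v := σ v) (by simpa using h) := by
  ext x
  simp [LinearMap.transvection.apply]

end Ring

variable {R V : Type*} [CommRing R] [AddCommGroup V] [Module R V]

theorem commutatorElement_eq {ζ ω : Dual R V} {p z : V} (hζ : ζ p = 0) (hω : ω z = 0)
    (hωp : ω p = 0) :
    ⁅transvection hζ, transvection hω⁆ = transvection (f := ζ z • ω) (v := p) (by simp [hωp]) := by
  rw [commutatorElement_def, mul_inv_eq_iff_eq_mul, mul_inv_eq_iff_eq_mul]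
  ext x
  simp [LinearMap.transvection.apply, hωp, hω]
  module

theorem smul_mem_of_mem {H : Subgroup (V ≃ₗ[R] V)} {ζ ω : Dual R V} {p z : V} (hζ : ζ p = 0)
    (hω : ω z = 0) (hωp : ω p = 0) (hX : transvection hζ ∈ H) (hY : transvection hω ∈ H) :
    transvection (f := ζ z • ω) (v := p) (by simp [hωp]) ∈ H := by
  rw [← commutatorElement_eq hζ hω hωp, commutatorElement_def]
  exact mul_mem (mul_mem (mul_mem hX hY) (inv_mem hX)) (inv_mem hY)

end LinearEquiv.transvection

theorem Module.Basis.exists_isUnit_minor {R M ι : Type*} [CommRing R] [IsLocalRing R]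
    [AddCommGroup M] [Module R M] [Fintype ι] [Nontrivial ι]
    (b : Basis ι R M) {x : M} {f : Dual R M} (hf : IsUnit (f x)) :
    ∃ (y : M) (g : Dual R M), IsUnit (f x * g y - g x * f y) := by
  classical
  have hsum : IsUnit (∑ i, b.repr x i * f (b i)) := by
    convert hf
    conv_rhs => rw [← b.sum_repr x]
    simp only [map_sum, map_smul, smul_eq_mul]
  obtain ⟨i, -, hi⟩ := IsLocalRing.exists_of_isUnit_sum hsum
  obtain ⟨j, hji⟩ := exists_ne i
  refine ⟨b j, b.repr x i • b.coord j - b.repr x j • b.coord i, ?_⟩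
  simpa [Finsupp.single_apply, hji, hji.symm, mul_comm] using hf.mul (isUnit_of_mul_isUnit_left hi)

section

variable {A : Type*} [CommRing A] {P : Type*} [AddCommGroup P] [Module A P]

section Localization

variable (𝔪 : Ideal A) [𝔪.IsPrime]

local notation "Aₘ" => Localization.AtPrime 𝔪
local notation "Pₘ" => LocalizedModule 𝔪.primeCompl P

noncomputable def Module.Dual.localization : Dual A P →ₗ[A] Dual Aₘ Pₘ :=
  IsLocalizedModule.mapExtendScalars 𝔪.primeCompl (LocalizedModule.mkLinearMap 𝔪.primeCompl P)
    (Algebra.linearMap A Aₘ) Aₘ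

theorem Module.Dual.localization_apply_mk (f : Dual A P) (x : P) :
    Dual.localization 𝔪 f (LocalizedModule.mk x 1) = algebraMap A Aₘ (f x) := by
  rw [Dual.localization, IsLocalizedModule.mapExtendScalars_apply_apply,
    ← LocalizedModule.mkLinearMap_apply, IsLocalizedModule.map_apply]
  rfl

theorem Module.Dual.exists_lift_localization [Module.FinitePresentation A P] (g : Dual Aₘ Pₘ) :
    ∃ (g₀ : Dual A P) (t : A), t ∉ 𝔪 ∧
      ∀ y, algebraMap A Aₘ (g₀ y) = algebraMap A Aₘ t * g (LocalizedModule.mk y 1) := by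
  obtain ⟨g₀, t, h⟩ := Module.FinitePresentation.exists_lift_of_isLocalizedModule 𝔪.primeCompl
    (Algebra.linearMap A Aₘ)
    ((g.restrictScalars A).comp (LocalizedModule.mkLinearMap 𝔪.primeCompl P))
  refine ⟨g₀, t, t.2, fun y => ?_⟩
  simpa [Submonoid.smul_def, Algebra.smul_def] using LinearMap.congr_fun h y

theorem LocalizedModule.exists_mk_eq_algebraMap_smul (y : Pₘ) :
    ∃ (y₀ : P) (s : A), s ∉ 𝔪 ∧ LocalizedModule.mk y₀ 1 = algebraMap A Aₘ s • y := by
  obtain ⟨⟨y₀, s⟩, h⟩ :=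
    IsLocalizedModule.surj 𝔪.primeCompl (LocalizedModule.mkLinearMap 𝔪.primeCompl P) y
  refine ⟨y₀, s, s.2, ?_⟩
  simpa [Submonoid.smul_def, algebraMap_smul] using h.symm

variable [Module.FinitePresentation A P] {r : ℕ}

theorem HasConstantRank.exists_apply_notMem (hrank : HasConstantRank A P r) (hr : 0 < r) :
    ∃ (g : Dual A P) (y : P), g y ∉ 𝔪 := by
  obtain ⟨e⟩ := hrank 𝔪 inferInstance
  let b := (Pi.basisFun Aₘ (Fin r)).map e.symm
  obtain ⟨g, t, ht, hg⟩ := Dual.exists_lift_localization 𝔪 (b.coord ⟨0, hr⟩)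
  obtain ⟨y, s, hs, hy⟩ := LocalizedModule.exists_mk_eq_algebraMap_smul 𝔪 (b ⟨0, hr⟩)
  refine ⟨g, y, fun hgy => ?_⟩
  have hunit : IsUnit (algebraMap A Aₘ (g y)) := by
    rw [hg, hy, map_smul, b.coord_apply, b.repr_self, Finsupp.single_eq_same, smul_eq_mul,
      mul_one]
    exact ((IsLocalization.AtPrime.isUnit_to_map_iff Aₘ 𝔪 t).2 ht).mul
      ((IsLocalization.AtPrime.isUnit_to_map_iff Aₘ 𝔪 s).2 hs)
  exact (IsLocalization.AtPrime.isUnit_to_map_iff Aₘ 𝔪 _).1 hunit hgy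

variable {𝔪}

theorem HasConstantRank.exists_minor_notMem (hrank : HasConstantRank A P r) (hr : 2 ≤ r)
    {x : P} {f : Dual A P} (hf : f x ∉ 𝔪) :
    ∃ (y : P) (g : Dual A P), f x * g y - g x * f y ∉ 𝔪 := by
  obtain ⟨e⟩ := hrank 𝔪 inferInstance
  have : Nontrivial (Fin r) := Fin.nontrivial_iff_two_le.2 hr
  obtain ⟨y', g', hD⟩ := ((Pi.basisFun Aₘ (Fin r)).map e.symm).exists_isUnit_minor
    (x := LocalizedModule.mk x 1) (f := Dual.localization 𝔪 f)
    (by rwa [Dual.localization_apply_mk, IsLocalization.AtPrime.isUnit_to_map_iff Aₘ 𝔪])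
  obtain ⟨g, t, ht, hg⟩ := Dual.exists_lift_localization 𝔪 g'
  obtain ⟨y, s, hs, hy⟩ := LocalizedModule.exists_mk_eq_algebraMap_smul 𝔪 y'
  refine ⟨y, g, fun hmem => ?_⟩
  have hunit : IsUnit (algebraMap A Aₘ (f x * g y - g x * f y)) := by
    have : algebraMap A Aₘ (f x * g y - g x * f y) = algebraMap A Aₘ t * algebraMap A Aₘ s *
        (Dual.localization 𝔪 f (LocalizedModule.mk x 1) * g' y' -
          g' (LocalizedModule.mk x 1) * Dual.localization 𝔪 f y') := by
      simp only [map_sub, map_mul, hg, ← Dual.localization_apply_mk, hy, map_smul, smul_eq_mul]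
      ring
    rw [this]
    exact (((IsLocalization.AtPrime.isUnit_to_map_iff Aₘ 𝔪 t).2 ht).mul
      ((IsLocalization.AtPrime.isUnit_to_map_iff Aₘ 𝔪 s).2 hs)).mul hD
  exact (IsLocalization.AtPrime.isUnit_to_map_iff Aₘ 𝔪 _).1 hunit hmem

theorem HasConstantRank.exists_dual_apply_eq_zero_apply_notMem (hrank : HasConstantRank A P r)
    (hr : 2 ≤ r) {x : P} {f : Dual A P} (hf : f x ∉ 𝔪) :
    ∃ (g : Dual A P) (y : P), g x = 0 ∧ g y ∉ 𝔪 := by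
  obtain ⟨y, g, hD⟩ := hrank.exists_minor_notMem hr hf
  exact ⟨f x • g - g x • f, y, by simp [mul_comm], by simpa using hD⟩

theorem HasConstantRank.exists_apply_eq_zero_dual_apply_notMem (hrank : HasConstantRank A P r)
    (hr : 2 ≤ r) {x : P} {f : Dual A P} (hf : f x ∉ 𝔪) :
    ∃ (y : P) (g : Dual A P), f y = 0 ∧ g y ∉ 𝔪 := by
  obtain ⟨y, g, hD⟩ := hrank.exists_minor_notMem hr hf
  exact ⟨f x • y - f y • x, g, by simp [mul_comm], by simpa [mul_comm] using hD⟩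

theorem HasConstantRank.exists_dual_apply_add_smul_notMem (hrank : HasConstantRank A P r)
    (hr : 0 < r) {a : A} (ha : a ∉ 𝔪) (m : P) :
    ∃ (n : P) (χ : Dual A P), χ (m + a • n) ∉ 𝔪 := by
  obtain ⟨g, y, hgy⟩ := hrank.exists_apply_notMem 𝔪 hr
  by_cases hgm : g m ∈ 𝔪
  · refine ⟨y, g, ?_⟩
    rw [map_add, map_smul, smul_eq_mul, 𝔪.add_mem_iff_right hgm]
    exact ‹𝔪.IsPrime›.mul_notMem ha hgy
  · exact ⟨0, g, by simpa using hgm⟩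

theorem HasConstantRank.exists_apply_sub_smul_notMem (hrank : HasConstantRank A P r)
    (hr : 0 < r) {a : A} (ha : a ∉ 𝔪) (ψ : Dual A P) :
    ∃ (χ : Dual A P) (w : P), (ψ - a • χ) w ∉ 𝔪 := by
  obtain ⟨g, y, hgy⟩ := hrank.exists_apply_notMem 𝔪 hr
  by_cases hψy : ψ y ∈ 𝔪
  · refine ⟨g, y, ?_⟩
    rw [LinearMap.sub_apply, LinearMap.smul_apply, smul_eq_mul, 𝔪.sub_mem_iff_right hψy]
    exact ‹𝔪.IsPrime›.mul_notMem ha hgy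
  · exact ⟨0, y, by simpa using hψy⟩

end Localization

theorem Module.Dual.apply_prod_mk (F : Dual A (A × P)) (x : A) (q : P) :
    F (x, q) = x * F (1, 0) + F (0, q) := by
  rw [← smul_eq_mul, ← map_smul, ← map_add, Prod.smul_mk, smul_eq_mul, mul_one, smul_zero,
    Prod.mk_add_mk, add_zero, zero_add]

namespace ELgroup

open LinearEquiv

variable {p : A × P} {F : Dual A (A × P)}

theorem transvection_mem_of_snd_eq_zero (hp : p.2 = 0) (hF : F (1, 0) = 0) (h : F p = 0) :
    transvection h ∈ ELgroup A P := by
  refine Subgroup.subset_closure (Or.inl ⟨p.1, F ∘ₗ LinearMap.inr A A P, fun x q => ?_⟩)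
  rw [transvection.apply, Dual.apply_prod_mk, hF]
  ext <;> simp [hp, mul_comm]

theorem transvection_mem_of_fst_eq_zero_of_apply_inr (hp : p.1 = 0) (hF : ∀ q, F (0, q) = 0)
    (h : F p = 0) : transvection h ∈ ELgroup A P := by
  refine Subgroup.subset_closure (Or.inr ⟨F (1, 0) • p.2, fun x q => ?_⟩)
  rw [transvection.apply, Dual.apply_prod_mk, hF]
  ext <;> simp [hp, smul_smul]

theorem transvection_mem_of_fst_eq_zero_of_apply_one_zero (hp : p.1 = 0) (hF : F (1, 0) = 0)
    (h : F p = 0) : transvection h ∈ ELgroup A P := by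
  have hΓ : LinearMap.fst A A P p = 0 := hp
  have := transvection.smul_mem_of_mem hΓ hF h
    (transvection_mem_of_fst_eq_zero_of_apply_inr hp (fun _ => rfl) hΓ)
    (transvection_mem_of_snd_eq_zero rfl hF hF)
  rwa [transvection.congr_smul _ h fun x => by simp] at this

theorem transvection_mem_of_fst_eq_zero (hp : p.1 = 0) (h : F p = 0) :
    transvection h ∈ ELgroup A P := by
  set b := F (1, 0)
  have hΓ : (b • LinearMap.fst A A P) p = 0 := by simp [hp]
  have hE : (F - b • LinearMap.fst A A P) p = 0 := by simp [h, hp]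
  have hsplit : transvection h = transvection hΓ * transvection hE := by
    rw [transvection.mul_of_right_eq]
    exact transvection.congr_smul _ _ fun x => by rw [add_sub_cancel]
  rw [hsplit]
  exact mul_mem (transvection_mem_of_fst_eq_zero_of_apply_inr hp (fun q => by simp) hΓ)
    (transvection_mem_of_fst_eq_zero_of_apply_one_zero hp (by simp [b]) hE)

theorem transvection_mem_of_apply_one_zero (hF : F (1, 0) = 0) (h : F p = 0) :
    transvection h ∈ ELgroup A P := by
  have h₁ : F (p.1, 0) = 0 := by
    rw [Dual.apply_prod_mk, hF, mul_zero, zero_add, Prod.mk_zero_zero, map_zero]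
  have h₂ : F (0, p.2) = 0 := by simpa [hF, h] using (Dual.apply_prod_mk F p.1 p.2).symm
  have hsplit : transvection h = transvection h₁ * transvection h₂ := by
    rw [transvection.mul_of_left_eq]
    exact transvection.congr_smul _ _ fun x => by simp
  rw [hsplit]
  exact mul_mem (transvection_mem_of_snd_eq_zero rfl hF h₁) (transvection_mem_of_fst_eq_zero rfl h₂)

/- With `e = χ p.2` and `ω₀ = p.1 • χ - e • fst` (which vanishes at `p`), the functional
`(e ^ 2 * χ' v) • F` splits as `(e * χ' v) • (e • F + F (1, 0) • ω₀)`, which vanishes at `(1, 0)`,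
plus `ζ z • (-F (1, 0) • ω₀)`, coming from the commutator of the transvections `(p, ζ)` and
`(z, -F (1, 0) • ω₀)`, where `ζ = χ'` on `P` and `z = (0, e • v - χ v • p.2)`. -/
theorem transvection_sq_mul_mem_of_apply_snd (h : F p = 0) (χ χ' : Dual A P)
    (hχ' : χ' p.2 = 0) (v : P) :
    transvection (f := (χ p.2 ^ 2 * χ' v) • F) (v := p) (by simp [h]) ∈ ELgroup A P := by
  obtain ⟨a, m⟩ := p
  change χ' m = 0 at hχ'
  set e := χ m
  obtain ⟨b, ψ, hF⟩ : ∃ (b : A) (ψ : Dual A P), ∀ x q, F (x, q) = x * b + ψ q :=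
    ⟨F (1, 0), F ∘ₗ LinearMap.inr A A P, Dual.apply_prod_mk F⟩
  set ω₀ : Dual A (A × P) := a • (χ ∘ₗ LinearMap.snd A A P) - e • LinearMap.fst A A P
  set ζ : Dual A (A × P) := χ' ∘ₗ LinearMap.snd A A P
  set z : A × P := (0, e • v - χ v • m)
  set G : Dual A (A × P) := (e * χ' v) • (e • F + b • ω₀)
  have hG : G (a, m) = 0 := by simp [G, ω₀, h, e]; ring
  have hζ : ζ (a, m) = 0 := hχ'
  have hω : (-b • ω₀) z = 0 := by simp [ω₀, z, e]; ring
  have hωp : (-b • ω₀) (a, m) = 0 := by simp [ω₀, e]; ring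
  have hsplit : transvection (f := (e ^ 2 * χ' v) • F) (v := (a, m)) (by simp [h]) =
      transvection hG * transvection (f := ζ z • (-b • ω₀)) (v := (a, m)) (by simp [hωp]) := by
    rw [transvection.mul_of_right_eq]
    refine transvection.congr_smul _ _ fun ⟨x, q⟩ => ?_
    congr 1
    simp [G, ω₀, ζ, z, hF, hχ']
    ring
  rw [hsplit]
  exact mul_mem (transvection_mem_of_apply_one_zero (by simp [G, ω₀, hF]; ring) hG)
    (transvection.smul_mem_of_mem hζ hω hωp (transvection_mem_of_apply_one_zero (by simp [ζ]) hζ)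
      (transvection_mem_of_fst_eq_zero rfl hω))

/- Here `(e ^ 2 * ξ n) • p = z + c • u` with `e = F (0, w)`, `c = e * ξ n`, `z ∈ 0 ⊕ P` and
`F z = F u = 0`; the transvection at `c • u` is the commutator of the transvections
`(u, ζ)` and `((0, n), F)` with `ζ = e • ξ - ξ w • F(0, ·)`. -/
theorem transvection_sq_mul_mem_of_apply_inr (h : F p = 0) {n : P} (hn : F (0, n) = 0)
    (ξ : Dual A P) (w : P) :
    transvection (f := (F (0, w) ^ 2 * ξ n) • F) (v := p) (by simp [h]) ∈ ELgroup A P := by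
  obtain ⟨a, m⟩ := p
  set e := F (0, w)
  obtain ⟨b, ψ, hF⟩ : ∃ (b : A) (ψ : Dual A P), ∀ x q, F (x, q) = x * b + ψ q :=
    ⟨F (1, 0), F ∘ₗ LinearMap.inr A A P, Dual.apply_prod_mk F⟩
  have he : e = ψ w := by simp [e, hF]
  have hψn : ψ n = 0 := by rw [← hn, hF, zero_mul, zero_add]
  have hm : a * b + ψ m = 0 := by rw [← hF, h]
  set c := e * ξ n
  set u : A × P := (a * e, -(a * b) • w)
  set z : A × P := (0, c • (e • m + (a * b) • w))
  set ζ : Dual A (A × P) := (e • ξ - ξ w • ψ) ∘ₗ LinearMap.snd A A P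
  have hz : F z = 0 := by simp [z, hF, ← he]; linear_combination c * e * hm
  have hu : F u = 0 := by simp [u, hF, ← he]; ring
  have hcu : F (c • u) = 0 := by rw [_root_.map_smul, hu, smul_zero]
  have hζu : ζ u = 0 := by simp [ζ, u, ← he]; ring
  have hζn : ζ (0, n) = c := by simp [ζ, c, hψn]
  have hpt : z + c • u = (e ^ 2 * ξ n) • (a, m) := by
    ext
    · simp [z, u, c]; ring
    · simp [z, u, c, smul_smul]; module
  have hsplit : transvection (f := (e ^ 2 * ξ n) • F) (v := (a, m)) (by simp [h]) =
      transvection hz * transvection hcu := by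
    rw [transvection.mul_of_left_eq]
    exact transvection.congr_smul _ _ fun x => by
      rw [hpt, LinearMap.smul_apply, smul_smul, smul_eq_mul, mul_comm]
  have hcomm : transvection hcu = transvection (f := ζ (0, n) • F) (v := u) (by simp [hu]) :=
    transvection.congr_smul _ _ fun x => by simp [hζn, smul_smul, mul_comm]
  rw [hsplit, hcomm]
  exact mul_mem (transvection_mem_of_fst_eq_zero rfl hz)
    (transvection.smul_mem_of_mem hζu hn hu
      (transvection_mem_of_apply_one_zero (by simp [ζ]) hζu)
      (transvection_mem_of_fst_eq_zero rfl _))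

def transvectionIdeal (p : A × P) (F : Dual A (A × P)) : Ideal A where
  carrier := {s | ∀ c : A, ∃ h : ((c * s) • F) p = 0, transvection h ∈ ELgroup A P}
  zero_mem' c := ⟨by simp, by
    rw [transvection.congr_smul _ (LinearMap.zero_apply p) fun x => by simp,
      transvection.of_left_eq_zero]
    exact one_mem _⟩
  add_mem' {s t} hs ht c := by
    obtain ⟨hs₀, hs⟩ := hs c
    obtain ⟨ht₀, ht⟩ := ht c
    simp only [mul_add, add_smul]
    refine ⟨by simp [hs₀, ht₀], ?_⟩
    rw [← transvection.mul_of_right_eq hs₀ ht₀]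
    exact mul_mem hs ht
  smul_mem' c' s hs c := by
    simp only [smul_eq_mul, ← mul_assoc]
    exact hs (c * c')

theorem transvection_mem_of_transvectionIdeal_eq_top (h : F p = 0)
    (htop : transvectionIdeal p F = ⊤) : transvection h ∈ ELgroup A P := by
  obtain ⟨h₁, hmem⟩ := (htop ▸ Submodule.mem_top : (1 : A) ∈ transvectionIdeal p F) 1
  rwa [transvection.congr_smul h₁ h fun x => by simp] at hmem

theorem transvectionIdeal_conj_le {σ : (A × P) ≃ₗ[A] (A × P)} (hσ : σ ∈ ELgroup A P) :
    transvectionIdeal (σ p) (F ∘ₗ σ.symm.toLinearMap) ≤ transvectionIdeal p F := by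
  intro s hs c
  obtain ⟨h, hmem⟩ := hs c
  have h' : ((c * s) • F) p = 0 := by simpa using h
  refine ⟨h', ?_⟩
  have hconj : σ * transvection h' * σ⁻¹ = transvection h :=
    (transvection.conj σ h').trans (transvection.congr_smul _ _ fun x => rfl)
  rw [show transvection h' = σ⁻¹ * (σ * transvection h' * σ⁻¹) * σ by group, hconj]
  exact mul_mem (mul_mem (inv_mem hσ) hmem) hσ

theorem sq_mul_mem_transvectionIdeal_of_apply_snd (h : F p = 0) (χ : Dual A P)
    {χ' : Dual A P} (hχ' : χ' p.2 = 0) (v : P) :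
    χ p.2 ^ 2 * χ' v ∈ transvectionIdeal p F := fun c =>
  ⟨by simp [h], by
    simpa [mul_left_comm c] using
      transvection_sq_mul_mem_of_apply_snd h χ (c • χ') (by simp [hχ']) v⟩

theorem sq_mul_mem_transvectionIdeal_of_apply_inr (h : F p = 0) {n : P} (hn : F (0, n) = 0)
    (ξ : Dual A P) (w : P) : F (0, w) ^ 2 * ξ n ∈ transvectionIdeal p F := fun c =>
  ⟨by simp [h], by
    simpa [mul_left_comm c] using transvection_sq_mul_mem_of_apply_inr h hn (c • ξ) w⟩

section Local

variable (𝔪 : Ideal A) [𝔪.IsPrime] [Module.FinitePresentation A P] {r : ℕ}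

theorem exists_mem_transvectionIdeal_notMem_of_isUnimodular (hrank : HasConstantRank A P r)
    (hr : 2 ≤ r) (h : F p = 0) (hp : IsUnimodular A p) :
    ∃ s ∈ transvectionIdeal p F, s ∉ 𝔪 := by
  obtain ⟨u, hu⟩ := hp
  obtain ⟨n, χ, hχ⟩ : ∃ (n : P) (χ : Dual A P), χ (p.2 + p.1 • n) ∉ 𝔪 := by
    by_cases hm : u (0, p.2) ∈ 𝔪
    · refine hrank.exists_dual_apply_add_smul_notMem (by omega) (fun ha => ?_) p.2
      rw [Dual.apply_prod_mk] at hu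
      exact 𝔪.one_notMem (hu ▸ add_mem (𝔪.mul_mem_right _ ha) hm)
    · exact ⟨0, u ∘ₗ LinearMap.inr A A P, by simpa using hm⟩
  have hΓ : LinearMap.fst A A P (0, n) = 0 := rfl
  set σ := transvection hΓ
  have hσ : σ ∈ ELgroup A P := transvection_mem_of_fst_eq_zero_of_apply_inr rfl (fun _ => rfl) hΓ
  have hσp : (σ p).2 = p.2 + p.1 • n := rfl
  have hσF : (F ∘ₗ σ.symm.toLinearMap) (σ p) = 0 := by
    rw [LinearMap.comp_apply, coe_coe, symm_apply_apply, h]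
  obtain ⟨χ', v, hχ'₀, hχ'v⟩ := hrank.exists_dual_apply_eq_zero_apply_notMem hr hχ
  refine ⟨_, transvectionIdeal_conj_le hσ
    (sq_mul_mem_transvectionIdeal_of_apply_snd hσF χ (hσp ▸ hχ'₀) v), ?_⟩
  rw [hσp]
  exact ‹𝔪.IsPrime›.mul_notMem (fun h2 => hχ (‹𝔪.IsPrime›.mem_of_pow_mem 2 h2)) hχ'v

theorem exists_mem_transvectionIdeal_notMem_of_apply_eq_one (hrank : HasConstantRank A P r)
    (hr : 2 ≤ r) (h : F p = 0) {v : A × P} (hv : F v = 1) :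
    ∃ s ∈ transvectionIdeal p F, s ∉ 𝔪 := by
  obtain ⟨χ, w, hw⟩ :
      ∃ (χ : Dual A P) (w : P), (F ∘ₗ LinearMap.inr A A P - F (1, 0) • χ) w ∉ 𝔪 := by
    by_cases hw : F (0, v.2) ∈ 𝔪
    · refine hrank.exists_apply_sub_smul_notMem (by omega) (fun hb => ?_) _
      rw [Dual.apply_prod_mk] at hv
      exact 𝔪.one_notMem (hv ▸ add_mem (𝔪.mul_mem_left _ hb) hw)
    · exact ⟨0, v.2, by simpa using hw⟩
  have hΔ : (χ ∘ₗ LinearMap.snd A A P) (1, 0) = 0 := by simp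
  set σ := transvection hΔ
  have hσ : σ ∈ ELgroup A P := transvection_mem_of_snd_eq_zero rfl hΔ hΔ
  have hσF : (F ∘ₗ σ.symm.toLinearMap) (σ p) = 0 := by
    rw [LinearMap.comp_apply, coe_coe, symm_apply_apply, h]
  have hσψ : F ∘ₗ σ.symm.toLinearMap ∘ₗ LinearMap.inr A A P =
      F ∘ₗ LinearMap.inr A A P - F (1, 0) • χ := by
    ext q
    simp [σ, transvection.symm_eq, LinearMap.transvection.apply, Dual.apply_prod_mk F (-χ q)]
    ring
  obtain ⟨n, ξ, hn, hξn⟩ := hrank.exists_apply_eq_zero_dual_apply_notMem hr (hσψ ▸ hw)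
  refine ⟨_, transvectionIdeal_conj_le hσ (sq_mul_mem_transvectionIdeal_of_apply_inr hσF hn ξ w),
    ?_⟩
  exact ‹𝔪.IsPrime›.mul_notMem (fun h2 => hw (hσψ ▸ ‹𝔪.IsPrime›.mem_of_pow_mem 2 h2)) hξn

end Local

theorem le_Egroup : ELgroup A P ≤ Egroup A (A × P) := by
  refine Subgroup.closure_mono ?_
  rintro σ (⟨a, φ, hσ⟩ | ⟨m, hσ⟩)
  · refine ⟨(1, 0), a • (φ ∘ₗ LinearMap.snd A A P), by simp,
      Or.inl ⟨LinearMap.fst A A P, rfl⟩, fun ⟨x, q⟩ => ?_⟩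
    rw [hσ]
    ext <;> simp [mul_comm]
  · refine ⟨(0, m), LinearMap.fst A A P, rfl, Or.inr ⟨Dual.eval A _ (1, 0), rfl⟩,
      fun ⟨x, q⟩ => ?_⟩
    rw [hσ]
    ext <;> simp

theorem Egroup_le [Module.Finite A P] [Module.Projective A P] {r : ℕ} (hr : 2 ≤ r)
    (hrank : HasConstantRank A P r) : Egroup A (A × P) ≤ ELgroup A P := by
  have := Module.finitePresentation_of_projective A P
  refine (Subgroup.closure_le _).2 ?_
  rintro τ ⟨p, F, h, hunim, hτ⟩
  obtain rfl : τ = transvection h := LinearEquiv.ext hτ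
  refine transvection_mem_of_transvectionIdeal_eq_top h (by_contra fun hne => ?_)
  obtain ⟨𝔪, h𝔪, hle⟩ := Ideal.exists_le_maximal _ hne
  have := h𝔪.isPrime
  obtain ⟨s, hs, hs𝔪⟩ := hunim.elim
    (exists_mem_transvectionIdeal_notMem_of_isUnimodular 𝔪 hrank hr h) fun ⟨Φ, hΦ⟩ =>
      exists_mem_transvectionIdeal_notMem_of_apply_eq_one 𝔪 hrank hr h
        (v := (evalEquiv A _).symm Φ) (by rwa [apply_evalEquiv_symm_apply])
  exact hs𝔪 (hle hs)

end ELgroup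

end

/-- **Theorem (Bak–Basu–Rao).** For a projective module `P` of rank `≥ 2`,
`EL(A ⊕ P) = E(A ⊕ P)`. -/
theorem EL_eq_E (A : Type) [CommRing A]
    (P : Type) [AddCommGroup P] [Module A P] [Module.Finite A P] [Module.Projective A P]
    (r : ℕ) (hr : 2 ≤ r) (hrank : HasConstantRank A P r) :
    ELgroup A P = Egroup A (A × P) :=
  le_antisymm ELgroup.le_Egroup (ELgroup.Egroup_le hr hrank)
end

section
/- Let R be a commutative ring, I an ideal of R, and n ≥ 3. Then E_n(R, I²) ⊆ E_n(I), where E_n(I) is the subgroup of E_n(R) generated by the elementary matrices E_ij(a) = Id + a·e_ij with a ∈ I, i ≠ j, and E_n(R, I²) is the normal closure of E_n(I²) in E_n(R). -/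
/-!
Conjugating `E_{ij}(c)` by any `e ∈ GL_n(R)` gives `1 + c p qᵀ`, where `p` is the `i`-th column
of `e` and `q`, `r` are the `j`-th and `i`-th rows of `e⁻¹`, so that `qᵀp = 0` and `rᵀp = 1`.
Writing `c ∈ I²` as a sum of products `xy` with `x, y ∈ I`, it suffices to treat
`1 + (x p)(y q)ᵀ`, and `q = ∑ q_k r_l (p_l e_k - p_k e_l)` is a combination of Koszul relations of
`p`, each supported on two coordinates. For `u, w` with entries in `I`, `wᵀu = 0` and `w`
vanishing at some coordinate `m` (which exists as `n ≥ 3`), `1 + u wᵀ` lies in `E_n(I)`: the part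
of `u` off the support of `w` gives a product of elementary matrices, and for the rest `u'`, which
also vanishes at `m`, `1 + u' wᵀ` is the commutator of `1 + u' e_mᵀ` and `1 + e_m wᵀ`.
-/

open Matrix

section OneAddVecMulVec

variable {ι R : Type*} [DecidableEq ι] [CommRing R]

theorem vecMulVec_single_single (i j : ι) (a b : R) :
    vecMulVec (Pi.single i a) (Pi.single j b) = single i j (a * b) := by
  ext s t
  simp only [vecMulVec_apply, Pi.single_apply, single_apply]
  split_ifs <;> simp_all

variable [Fintype ι]

theorem one_add_vecMulVec_mul_one_add_vecMulVec (u v u' v' : ι → R) (h : v ⬝ᵥ u' = 0) :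
    (1 + vecMulVec u v) * (1 + vecMulVec u' v') = 1 + vecMulVec u v + vecMulVec u' v' := by
  rw [mul_add, add_mul, add_mul, vecMulVec_mul_vecMulVec, h, zero_smul, vecMulVec_zero]
  simp only [one_mul, mul_one, add_zero, add_assoc]

theorem mul_single_mul (E E' : Matrix ι ι R) (i j : ι) (c : R) :
    E * single i j c * E' = vecMulVec (c • E.col i) (E'.row j) := by
  ext s t
  simp [mul_apply, single_apply, vecMulVec_apply, ite_and, mul_comm c]

variable {S : Submonoid (Matrix ι ι R)}

theorem one_add_vecMulVec_sum_right_mem {α : Type*} (s : Finset α) (u : ι → R)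
    (v : α → ι → R) (hv : ∀ a ∈ s, v a ⬝ᵥ u = 0) (hS : ∀ a ∈ s, 1 + vecMulVec u (v a) ∈ S) :
    1 + vecMulVec u (∑ a ∈ s, v a) ∈ S := by
  classical
  induction s using Finset.induction_on with
  | empty => simp [S.one_mem]
  | insert a s ha ih =>
    rw [Finset.sum_insert ha, vecMulVec_add, ← add_assoc,
      ← one_add_vecMulVec_mul_one_add_vecMulVec _ _ _ _ (hv a (s.mem_insert_self a))]
    exact S.mul_mem (hS a (s.mem_insert_self a))
      (ih (fun b hb => hv b (Finset.mem_insert_of_mem hb))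
        (fun b hb => hS b (Finset.mem_insert_of_mem hb)))

theorem one_add_vecMulVec_sum_left_mem {α : Type*} (s : Finset α) (u : α → ι → R)
    (v : ι → R) (hv : ∀ a ∈ s, v ⬝ᵥ u a = 0) (hS : ∀ a ∈ s, 1 + vecMulVec (u a) v ∈ S) :
    1 + vecMulVec (∑ a ∈ s, u a) v ∈ S := by
  classical
  induction s using Finset.induction_on with
  | empty => simp [S.one_mem]
  | insert a s ha ih =>
    rw [Finset.sum_insert ha, add_comm (u a), add_vecMulVec, ← add_assoc,
      ← one_add_vecMulVec_mul_one_add_vecMulVec _ _ _ _ (hv a (s.mem_insert_self a))]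
    exact S.mul_mem
      (ih (fun b hb => hv b (Finset.mem_insert_of_mem hb))
        (fun b hb => hS b (Finset.mem_insert_of_mem hb)))
      (hS a (s.mem_insert_self a))

end OneAddVecMulVec

theorem commutator_one_add_eq_one_add_mul {M : Type*} [Ring M] {A B : M} (hAA : A * A = 0)
    (hBA : B * A = 0) (hBB : B * B = 0) :
    (1 + A) * (1 + B) * (1 - A) * (1 - B) = 1 + A * B := by
  have hABA : A * B * A = 0 := by rw [mul_assoc, hBA, mul_zero]
  simp only [mul_add, add_mul, mul_sub, sub_mul, one_mul, mul_one, hAA, hBA, hBB, hABA,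
    mul_assoc, mul_zero, zero_mul]
  abel

section Koszul

variable {ι R : Type*} [DecidableEq ι] [CommRing R]

def koszul (p : ι → R) (k l : ι) : ι → R := Pi.single k (p l) - Pi.single l (p k)

theorem koszul_apply_of_ne (p : ι → R) {k l t : ι} (hk : t ≠ k) (hl : t ≠ l) :
    koszul p k l t = 0 := by
  simp [koszul, hk, hl]

variable [Fintype ι]

theorem koszul_dotProduct (p : ι → R) (k l : ι) : koszul p k l ⬝ᵥ p = 0 := by
  simp [koszul, sub_dotProduct, mul_comm]

theorem sum_sum_smul_koszul (p q r : ι → R) :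
    ∑ k, ∑ l, (q k * r l) • koszul p k l = (r ⬝ᵥ p) • q - (q ⬝ᵥ p) • r := by
  ext t
  simp [koszul, Finset.sum_apply, Pi.single_apply, mul_sub, Finset.sum_sub_distrib, dotProduct,
    Finset.sum_mul]
  congr 1 <;> exact Finset.sum_congr rfl fun _ _ => by ring

end Koszul

namespace EnIdeal

variable {R : Type*} [CommRing R] {n : ℕ} (I : Ideal R)

/-- `E_n(I)` as a submonoid of the matrix ring, so that matrices `1 + u vᵀ` can be multiplied
without carrying invertibility proofs. -/
def matrixSubmonoid : Submonoid (Matrix (Fin n) (Fin n) R) :=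
  (EnIdeal R n I).toSubmonoid.map (Units.coeHom _)

variable {I}

theorem mem_of_val_mem_matrixSubmonoid {g : GL (Fin n) R}
    (hg : (g : Matrix (Fin n) (Fin n) R) ∈ matrixSubmonoid I) : g ∈ EnIdeal R n I := by
  obtain ⟨h, hh, hhg⟩ := Submonoid.mem_map.mp hg
  rwa [← Units.ext hhg]

theorem one_add_single_mem {i j : Fin n} (hij : i ≠ j) {a : R} (ha : a ∈ I) :
    1 + single i j a ∈ matrixSubmonoid I := by
  have hunit : IsUnit (elemMatrix i j a) := by
    rw [isUnit_iff_isUnit_det, elemMatrix, ← transvection, det_transvection_of_ne i j hij]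
    exact isUnit_one
  exact ⟨hunit.unit, Subgroup.subset_closure ⟨i, j, a, hij, ha, rfl⟩, rfl⟩

theorem one_add_vecMulVec_mem_of_disjoint {u v : Fin n → R} (hdisj : ∀ t, u t = 0 ∨ v t = 0)
    (huv : ∀ s t, u s * v t ∈ I) : 1 + vecMulVec u v ∈ matrixSubmonoid I := by
  have hvu : ∀ t, v t * u t = 0 := fun t => by rcases hdisj t with h | h <;> simp [h]
  rw [← Finset.univ_sum_single v]
  refine one_add_vecMulVec_sum_right_mem _ _ _ (fun t _ => by simp [hvu]) (fun t _ => ?_)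
  rw [← Finset.univ_sum_single u]
  refine one_add_vecMulVec_sum_left_mem _ _ _ (fun s _ => ?_) (fun s _ => ?_)
  · rw [single_dotProduct, Pi.single_apply]
    split_ifs with hts
    · rw [hts, hvu]
    · rw [mul_zero]
  · rw [vecMulVec_single_single]
    by_cases hst : s = t
    · subst hst
      simp [mul_comm (u s), hvu, (matrixSubmonoid I).one_mem]
    · exact one_add_single_mem hst (huv s t)

theorem one_add_vecMulVec_mem_of_apply_eq_zero_of_apply_eq_zero {u w : Fin n → R} {m : Fin n}
    (hum : u m = 0) (hwm : w m = 0) (hu : ∀ t, u t ∈ I) (hw : ∀ t, w t ∈ I)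
    (h : w ⬝ᵥ u = 0) : 1 + vecMulVec u w ∈ matrixSubmonoid I := by
  set e : Fin n → R := Pi.single m 1
  have heu : e ⬝ᵥ u = 0 := by simp [e, hum]
  have hwe : w ⬝ᵥ e = 0 := by simp [e, hwm]
  have hee : e ⬝ᵥ e = 1 := by simp [e]
  have hcomm := commutator_one_add_eq_one_add_mul (A := vecMulVec u e) (B := vecMulVec e w)
    (by simp [vecMulVec_mul_vecMulVec, heu]) (by simp [vecMulVec_mul_vecMulVec, h])
    (by simp [vecMulVec_mul_vecMulVec, hwe])
  rw [vecMulVec_mul_vecMulVec, hee, one_smul] at hcomm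
  rw [← hcomm, sub_eq_add_neg, sub_eq_add_neg, ← neg_vecMulVec, ← vecMulVec_neg]
  have hue : ∀ {u : Fin n → R}, u m = 0 → (∀ t, u t ∈ I) →
      1 + vecMulVec u e ∈ matrixSubmonoid I := fun hum hu =>
    one_add_vecMulVec_mem_of_disjoint (fun t => by by_cases htm : t = m <;> simp [e, htm, hum])
      (fun s _ => I.mul_mem_right _ (hu s))
  have hew : ∀ {w : Fin n → R}, w m = 0 → (∀ t, w t ∈ I) →
      1 + vecMulVec e w ∈ matrixSubmonoid I := fun hwm hw =>
    one_add_vecMulVec_mem_of_disjoint (fun t => by by_cases htm : t = m <;> simp [e, htm, hwm])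
      (fun _ t => I.mul_mem_left _ (hw t))
  exact mul_mem (mul_mem (mul_mem (hue hum hu) (hew hwm hw))
    (hue (by simp [hum]) fun t => I.neg_mem (hu t))) (hew (by simp [hwm]) fun t => I.neg_mem (hw t))

theorem one_add_vecMulVec_mem_of_apply_eq_zero {u w : Fin n → R} {m : Fin n} (hwm : w m = 0)
    (hu : ∀ t, u t ∈ I) (hw : ∀ t, w t ∈ I) (h : w ⬝ᵥ u = 0) :
    1 + vecMulVec u w ∈ matrixSubmonoid I := by
  classical
  set u₁ : Fin n → R := fun t => if w t = 0 then u t else 0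
  set u₂ : Fin n → R := fun t => if w t = 0 then 0 else u t
  have hwu₁ : w ⬝ᵥ u₁ = 0 :=
    Finset.sum_eq_zero fun t _ => by by_cases ht : w t = 0 <;> simp [u₁, ht]
  have hwu₂ : w ⬝ᵥ u₂ = 0 := by
    rw [← h]
    exact Finset.sum_congr rfl fun t _ => by by_cases ht : w t = 0 <;> simp [u₂, ht]
  have hu₁₂ : u = u₂ + u₁ := funext fun t => by by_cases ht : w t = 0 <;> simp [u₁, u₂, ht]
  rw [hu₁₂, add_vecMulVec, ← add_assoc, ← one_add_vecMulVec_mul_one_add_vecMulVec _ _ _ _ hwu₁]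
  refine mul_mem (one_add_vecMulVec_mem_of_apply_eq_zero_of_apply_eq_zero (m := m)
    (by simp [u₂, hwm]) hwm (fun t => ?_) hw hwu₂) (one_add_vecMulVec_mem_of_disjoint
      (fun t => by by_cases ht : w t = 0 <;> simp [u₁, ht]) (fun s t => ?_))
  · by_cases ht : w t = 0 <;> simp [u₂, ht, hu t]
  · by_cases hs : w s = 0 <;> simp [u₁, hs, I.mul_mem_right _ (hu s)]

theorem one_add_vecMulVec_smul_koszul_mem (hn : 3 ≤ n) (p : Fin n → R) (k l : Fin n) {x d : R}
    (hx : x ∈ I) (hd : d ∈ I) : 1 + vecMulVec (x • p) (d • koszul p k l) ∈ matrixSubmonoid I := by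
  obtain ⟨m, hmk, hml⟩ := Fin.exists_ne_and_ne_of_two_lt k l (by omega)
  exact one_add_vecMulVec_mem_of_apply_eq_zero (m := m) (by simp [koszul_apply_of_ne p hmk hml])
    (fun _ => I.mul_mem_right _ hx) (fun _ => I.mul_mem_right _ hd)
    (by simp [koszul_dotProduct])

variable {p q r : Fin n → R}

theorem one_add_vecMulVec_smul_smul_mem (hn : 3 ≤ n) (hqp : q ⬝ᵥ p = 0) (hrp : r ⬝ᵥ p = 1)
    {x y : R} (hx : x ∈ I) (hy : y ∈ I) :
    1 + vecMulVec (x • p) (y • q) ∈ matrixSubmonoid I := by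
  have hq : y • q = ∑ k, ∑ l, (y * (q k * r l)) • koszul p k l := by
    have hkoszul := sum_sum_smul_koszul p q r
    rw [hqp, hrp, one_smul, zero_smul, sub_zero] at hkoszul
    conv_lhs => rw [← hkoszul]
    simp_rw [Finset.smul_sum, smul_smul]
  have hdot : ∀ (c : R) k l, (c • koszul p k l) ⬝ᵥ (x • p) = 0 := fun c k l => by
    rw [smul_dotProduct, dotProduct_smul, koszul_dotProduct, smul_zero, smul_zero]
  rw [hq]
  refine one_add_vecMulVec_sum_right_mem _ _ _ (fun k _ => ?_) fun k _ =>
    one_add_vecMulVec_sum_right_mem _ _ _ (fun l _ => hdot _ k l) fun l _ =>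
      one_add_vecMulVec_smul_koszul_mem hn p k l hx (I.mul_mem_right _ hy)
  rw [sum_dotProduct]
  exact Finset.sum_eq_zero fun l _ => hdot _ k l

theorem one_add_vecMulVec_smul_mem_of_mem_sq (hn : 3 ≤ n) (hqp : q ⬝ᵥ p = 0) (hrp : r ⬝ᵥ p = 1)
    {c : R} (hc : c ∈ I ^ 2) : 1 + vecMulVec (c • p) q ∈ matrixSubmonoid I := by
  rw [pow_two] at hc
  refine Submodule.mul_induction_on hc (fun x hx y hy => ?_) (fun a b ha hb => ?_)
  · have : vecMulVec ((x * y) • p) q = vecMulVec (x • p) (y • q) := by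
      ext s t
      simp only [vecMulVec_apply, Pi.smul_apply, smul_eq_mul]
      ring
    rw [this]
    exact one_add_vecMulVec_smul_smul_mem hn hqp hrp hx hy
  · rw [add_smul, add_vecMulVec, ← add_assoc,
      ← one_add_vecMulVec_mul_one_add_vecMulVec _ _ _ _ (by simp [hqp])]
    exact mul_mem ha hb

theorem conj_elemMatrix_mem_of_mem_sq (hn : 3 ≤ n) (e g : GL (Fin n) R) {i j : Fin n}
    (hij : i ≠ j) {c : R} (hc : c ∈ I ^ 2) (hg : (g : Matrix (Fin n) (Fin n) R) = elemMatrix i j c) :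
    e * g * e⁻¹ ∈ EnIdeal R n I := by
  set E : Matrix (Fin n) (Fin n) R := ↑e
  set E' : Matrix (Fin n) (Fin n) R := ↑(e⁻¹ : GL (Fin n) R)
  have hconj : ((e * g * e⁻¹ : GL (Fin n) R) : Matrix (Fin n) (Fin n) R) =
      1 + vecMulVec (c • E.col i) (E'.row j) := by
    rw [Units.val_mul, Units.val_mul, hg, elemMatrix, mul_add, add_mul, mul_one, e.mul_inv,
      mul_single_mul]
  have hinv : E' * E = 1 := e.inv_mul
  have hqp : E'.row j ⬝ᵥ E.col i = 0 := by
    change (E' * E) j i = 0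
    rw [hinv, one_apply_ne hij.symm]
  have hrp : E'.row i ⬝ᵥ E.col i = 1 := by
    change (E' * E) i i = 1
    rw [hinv, one_apply_eq]
  apply mem_of_val_mem_matrixSubmonoid
  rw [hconj]
  exact one_add_vecMulVec_smul_mem_of_mem_sq hn hqp hrp hc

end EnIdeal

/-- **Lemma.** For `n ≥ 3` and an ideal `I` of `R`, `E_n(R, I²) ⊆ E_n(I)`. -/
theorem EnRel_sq_subset_EnIdeal (R : Type) [CommRing R] (I : Ideal R) (n : ℕ) (hn : 3 ≤ n) :
    EnRel R n (I ^ 2) ≤ EnIdeal R n I := by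
  refine (Subgroup.closure_le _).mpr ?_
  rintro _ ⟨e, -, g, hg, rfl⟩
  have hle : EnIdeal R n (I ^ 2) ≤ (EnIdeal R n I).comap (MulAut.conj e).toMonoidHom :=
    (Subgroup.closure_le _).mpr fun _ ⟨_, _, _, hij, hc, hh⟩ =>
      EnIdeal.conj_elemMatrix_mem_of_mem_sq hn e _ hij hc hh
  exact hle hg
end
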